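/- arXiv:1406.6413 — 2 statements merged into one kernel-verified Lean document; each statement's English description precedes it below -/
import Mathlib

section
/- Let Γ be a connected component of D(A)^m containing a tuple c with lvl(c₁) = ⋯ = lvl(c_m). Then every tuple d ∈ Γ also satisfies lvl(d₁) = ⋯ = lvl(d_m), and either Γ equals the diagonal component Δ_m or Γ is a singleton. -/
/-- The positions `i ∈ [k]` at which `a` equals the `i`-th entry of `r`. -/
def idxSet {A : Type} [DecidableEq A] {k : ℕ} (a : A) (r : Fin k → A) : Finset (Fin k) :=
  Finset.univ.filter (fun i => a = r i)

/-- Direction pattern of the oriented path `Q_I`: a single edge, then for each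
`l ∈ [k]` a single edge (if `l ∈ I`) or a zigzag (otherwise), then a single edge. -/
def qdirs {k : ℕ} (I : Finset (Fin k)) : List Bool :=
  [true] ++ ((List.finRange k).flatMap
    (fun l => if l ∈ I then [true] else [true, false, true])) ++ [true]

/-- Edge relation of the oriented path with direction pattern `ds`
(vertices are `0, 1, ..., ds.length`). -/
def pedge (ds : List Bool) (x y : ℕ) : Prop :=
  (y = x + 1 ∧ x < ds.length ∧ ds.getD x false = true) ∨
  (x = y + 1 ∧ y < ds.length ∧ ds.getD y false = false)

/-- Number of edges of the connecting path `P_(a,r) = Q_{idxSet a r}`. -/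
def plen {A : Type} [DecidableEq A] {k : ℕ} (a : A) (r : Fin k → A) : ℕ :=
  (qdirs (idxSet a r)).length

/-- Vertices of the digraph `D(A)` for the structure `(A; R)`. -/
inductive DVert {A : Type} [DecidableEq A] {k : ℕ} (R : Set (Fin k → A)) : Type where
  | base : A → DVert R
  | top : (r : Fin k → A) → r ∈ R → DVert R
  | inner : (a : A) → (r : Fin k → A) → r ∈ R → (j : ℕ) → 0 < j → j < plen a r → DVert R

/-- `isAt v a r x` : vertex `v` of `D(A)` sits at position `x` of the connecting path
`P_(a,r)`. -/
def isAt {A : Type} [DecidableEq A] {k : ℕ} {R : Set (Fin k → A)} :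
    DVert R → A → (Fin k → A) → ℕ → Prop
  | .base a', a, _, x => a' = a ∧ x = 0
  | .top r' _, a, r, x => r' = r ∧ x = plen a r
  | .inner a' r' _ j _ _, a, r, x => a' = a ∧ r' = r ∧ x = j

/-- The edge relation of the digraph `D(A)`. -/
def dedge {A : Type} [DecidableEq A] {k : ℕ} {R : Set (Fin k → A)}
    (u v : DVert R) : Prop :=
  ∃ a r, r ∈ R ∧ ∃ x y, isAt u a r x ∧ isAt v a r y ∧
    pedge (qdirs (idxSet a r)) x y

/-- Height of position `x` along a path with direction pattern `ds`. -/
def phgt (ds : List Bool) (x : ℕ) : ℤ :=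
  ((ds.take x).count true : ℤ) - ((ds.take x).count false : ℤ)

/-- The level function of the balanced digraph `D(A)`. -/
def lvlD {A : Type} [DecidableEq A] {k : ℕ} {R : Set (Fin k → A)} : DVert R → ℕ
  | .base _ => 0
  | .top _ _ => k + 2
  | .inner a r _ j _ _ => (phgt (qdirs (idxSet a r)) j).toNat

/-- `walkAlong ds u v` : one can walk in `D(A)` from `u` to `v` following the
oriented path with direction pattern `ds` (i.e. there is a homomorphism of the path
into `D(A)` sending the initial vertex to `u` and the terminal vertex to `v`). -/
def walkAlong {A : Type} [DecidableEq A] {k : ℕ} {R : Set (Fin k → A)}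
    (ds : List Bool) (u v : DVert R) : Prop :=
  ∃ φ : ℕ → DVert R, φ 0 = u ∧ φ ds.length = v ∧
    ∀ x < ds.length,
      (ds.getD x false = true → dedge (φ x) (φ (x + 1))) ∧
      (ds.getD x false = false → dedge (φ (x + 1)) (φ x))

/-- Connectivity (by oriented paths, i.e. ignoring edge directions) in the power
digraph `D(A)^m`. -/
def connM {A : Type} [DecidableEq A] {k : ℕ} {R : Set (Fin k → A)} {m : ℕ}
    (u v : Fin m → DVert R) : Prop :=
  Relation.ReflTransGen
    (fun x y : Fin m → DVert R =>
      (∀ i, dedge (x i) (y i)) ∨ (∀ i, dedge (y i) (x i))) u v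


namespace CompAux

def sg (b : Bool) : ℤ := if b then 1 else -1

def SS (l : List Bool) (x : ℕ) : ℤ := ((l.take x).map sg).sum

lemma SS_zero (l : List Bool) : SS l 0 = 0 := rfl

lemma SS_cons_succ (b : Bool) (l : List Bool) (x : ℕ) :
    SS (b :: l) (x+1) = sg b + SS l x := by
  simp [SS, List.take_succ_cons]

lemma SS_append (l1 l2 : List Bool) (x : ℕ) :
    SS (l1 ++ l2) x = SS l1 x + SS l2 (x - l1.length) := by
  simp [SS, List.take_append]

lemma SS_of_le {l : List Bool} {x : ℕ} (h : l.length ≤ x) : SS l x = SS l l.length := by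
  rw [SS, SS, List.take_of_length_le h, List.take_length]

lemma SS_succ {l : List Bool} {x : ℕ} (h : x < l.length) :
    SS l (x+1) = SS l x + sg (l.getD x false) := by
  induction l generalizing x with
  | nil => simp at h
  | cons b t ih =>
    cases x with
    | zero => simp [SS_cons_succ, SS_zero]
    | succ x =>
      rw [SS_cons_succ, SS_cons_succ, ih (by simpa using h), List.getD_cons_succ]
      ring

lemma count_sub (t : List Bool) :
    ((t.count true : ℤ) - (t.count false : ℤ)) = (t.map sg).sum := by
  induction t with
  | nil => simp
  | cons b l ih =>
    cases b <;> simp [List.count_cons, sg] at * <;> push_cast <;> omega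

lemma phgt_eq (l : List Bool) (x : ℕ) : phgt l x = SS l x := by
  unfold phgt SS
  exact count_sub (l.take x)

inductive Chain : List Bool → ℕ → Prop
  | nil : Chain [] 0
  | one {l n} : Chain l n → Chain (true :: l) (n+1)
  | three {l n} : Chain l n → Chain (true :: false :: true :: l) (n+1)

lemma chain_first {l : List Bool} {n : ℕ} (h : Chain l n) (hne : l ≠ []) :
    l.getD 0 false = true := by
  cases h <;> simp_all

lemma chain_S {l : List Bool} {n : ℕ} (h : Chain l n) :
    (∀ x, 0 ≤ SS l x ∧ SS l x ≤ n) ∧ SS l l.length = n := by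
  induction h with
  | nil => constructor <;> simp [SS]
  | one hc ih =>
    refine ⟨fun x => ?_, ?_⟩
    · cases x with
      | zero => simp [SS_zero]; omega
      | succ x =>
        have := (ih.1 x)
        rw [SS_cons_succ]
        simp [sg]
        omega
    · rw [List.length_cons, SS_cons_succ, ih.2]
      simp [sg]
      omega
  | three hc ih =>
    refine ⟨fun x => ?_, ?_⟩
    · match x with
      | 0 => simp [SS_zero]; omega
      | 1 => rw [SS_cons_succ]; simp [sg, SS_zero]
      | 2 => rw [SS_cons_succ, SS_cons_succ]; simp [sg, SS_zero]; omega
      | (x+3) =>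
        have := ih.1 x
        rw [SS_cons_succ, SS_cons_succ, SS_cons_succ]
        simp [sg]
        push_cast
        omega
    · simp only [List.length_cons]
      rw [SS_cons_succ, SS_cons_succ, SS_cons_succ, ih.2]
      simp [sg]
      omega

lemma chain_fa {l : List Bool} {n : ℕ} (h : Chain l n) :
    ∀ p, p + 1 < l.length → l.getD (p+1) false = false →
      l.getD p false = true ∧ (∀ q, p = q + 1 → l.getD q false = true) ∧
      p + 2 < l.length ∧ l.getD (p+2) false = true ∧ p + 3 ≤ l.length ∧
      (p + 3 < l.length → l.getD (p+3) false = true) := by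
  induction h with
  | nil => intro p hp; simp at hp
  | @one l n hc ih =>
    intro p hp hf
    match p with
    | 0 =>
      exfalso
      have : l ≠ [] := by intro e; subst e; simp at hp
      have := chain_first hc this
      simp [List.getD_cons_succ] at hf
      simp_all
    | (q+1) =>
      simp only [List.getD_cons_succ] at hf ⊢
      have hq : q + 1 < l.length := by simpa using hp
      obtain ⟨h1, h2, h3, h4, h5, h6⟩ := ih q hq hf
      refine ⟨h1, ?_, by simp only [List.length_cons]; omega,
        h4, by simp only [List.length_cons]; omega,
        fun hlt => h6 (by simp only [List.length_cons] at hlt; omega)⟩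
      intro q2 he
      have : q = (q2 - 1) + 1 ∨ q = 0 := by omega
      rcases this with h' | h'
      · have := h2 (q2-1) h'
        have hq2 : q2 = (q2-1) + 1 := by omega
        rw [hq2, List.getD_cons_succ]
        exact this
      · subst h'
        have : q2 = 0 := by omega
        subst this
        simp
  | @three l n hc ih =>
    intro p hp hf
    match p with
    | 0 =>
      refine ⟨by simp, by omega, by simp only [List.length_cons]; omega, by simp,
        by simp only [List.length_cons]; omega, fun hlt => ?_⟩
      have hne : l ≠ [] := by
        intro e; subst e; simp at hlt
      have h0 := chain_first hc hne
      simpa using h0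
    | 1 => simp at hf
    | 2 =>
      exfalso
      simp only [List.getD_cons_succ] at hf
      have hne : l ≠ [] := by
        intro e; subst e
        simp at hp
      have := chain_first hc hne
      simp_all
    | (q+3) =>
      simp only [List.getD_cons_succ] at hf ⊢
      have hq : q + 1 < l.length := by
        simp only [List.length_cons] at hp; omega
      obtain ⟨h1, h2, h3, h4, h5, h6⟩ := ih q hq hf
      refine ⟨h1, ?_, by simp only [List.length_cons]; omega,
        h4, by simp only [List.length_cons]; omega,
        fun hlt => h6 (by simp only [List.length_cons] at hlt; omega)⟩
      intro q2 he
      have hq2 : q2 = (q2 - 3) + 3 ∨ q2 = 2 := by omega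
      rcases hq2 with h' | h'
      · rw [h', List.getD_cons_succ, List.getD_cons_succ, List.getD_cons_succ]
        exact h2 (q2 - 3) (by omega)
      · subst h'; simp

section QD
variable {k : ℕ} (I : Finset (Fin k))

def qbody : List Bool :=
  (List.finRange k).flatMap (fun l => if l ∈ I then [true] else [true, false, true])

lemma qdirs_eq : qdirs I = true :: ((qbody I) ++ [true]) := by
  simp [qdirs, qbody]

lemma chain_flat : ∀ L : List (Fin k),
    Chain (L.flatMap (fun l => if l ∈ I then [true] else [true, false, true])) L.length := by
  intro L
  induction L with
  | nil => exact Chain.nil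
  | cons a L ih =>
    by_cases h : a ∈ I <;> simp [List.flatMap_cons, h] <;>
      [exact Chain.one ih; exact Chain.three ih]

lemma chain_qbody : Chain (qbody I) k := by
  have := chain_flat I (List.finRange k)
  simpa [qbody] using this

lemma qlen : (qdirs I).length = (qbody I).length + 2 := by
  rw [qdirs_eq]; simp

lemma q0 : (qdirs I).getD 0 false = true := by
  rw [qdirs_eq]; rfl

lemma SS_single (z : ℕ) : 0 ≤ SS [true] z ∧ SS [true] z ≤ 1 ∧ (1 ≤ z → SS [true] z = 1) := by
  cases z with
  | zero => simp [SS_zero]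
  | succ z => rw [SS_cons_succ]; simp [sg, SS]

lemma qSS_succ_eq (x : ℕ) :
    SS (qdirs I) (x+1) = 1 + SS (qbody I) x + SS [true] (x - (qbody I).length) := by
  rw [qdirs_eq, SS_cons_succ, SS_append]
  simp [sg]
  ring

lemma qSS_ge_one {x : ℕ} (h : 1 ≤ x) : 1 ≤ SS (qdirs I) x := by
  obtain ⟨y, rfl⟩ : ∃ y, x = y + 1 := ⟨x - 1, by omega⟩
  rw [qSS_succ_eq]
  have h1 := (chain_S (chain_qbody I)).1 y
  have h2 := SS_single (y - (qbody I).length)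
  omega

lemma qSS_le {x : ℕ} (h : x < (qdirs I).length) : SS (qdirs I) x ≤ k + 1 := by
  cases x with
  | zero => rw [SS_zero]; omega
  | succ y =>
    rw [qSS_succ_eq]
    rw [qlen] at h
    have h1 := (chain_S (chain_qbody I)).1 y
    have h2 := SS_single (y - (qbody I).length)
    have hy : y - (qbody I).length = 0 := by omega
    rw [hy] at *
    have := (SS_single (0:ℕ))
    simp [SS_zero] at *
    omega

lemma qSS_len : SS (qdirs I) ((qdirs I).length) = k + 2 := by
  rw [qlen, qSS_succ_eq]
  have h1 := (chain_S (chain_qbody I)).2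
  have h1' : SS (qbody I) ((qbody I).length + 1) = k := by
    rw [SS_of_le (by omega)]; exact h1
  have h2 := (SS_single ((qbody I).length + 1 - (qbody I).length)).2.2 (by omega)
  omega

lemma qb_getD (y : ℕ) (h : y < (qbody I).length) :
    (qdirs I).getD (y+1) false = (qbody I).getD y false := by
  rw [qdirs_eq, List.getD_cons_succ]
  exact List.getD_append _ _ _ _ h

lemma qb_getD_top : (qdirs I).getD ((qbody I).length + 1) false = true := by
  rw [qdirs_eq, List.getD_cons_succ, List.getD_append_right _ _ _ _ (le_refl _)]
  simp

lemma qlast : (qdirs I).getD ((qdirs I).length - 1) false = true := by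
  rw [qlen]
  simpa using qb_getD_top I

lemma qfa {x : ℕ} (hx : x < (qdirs I).length) (hf : (qdirs I).getD x false = false) :
    2 ≤ x ∧ x + 2 < (qdirs I).length ∧
    (qdirs I).getD (x-1) false = true ∧ (qdirs I).getD (x-2) false = true ∧
    (qdirs I).getD (x+1) false = true ∧ (qdirs I).getD (x+2) false = true := by
  have hch := chain_qbody I
  rw [qlen] at hx
  -- x ≥ 1
  have hx1 : 1 ≤ x := by
    rcases Nat.eq_zero_or_pos x with rfl | h
    · rw [q0] at hf; simp at hf
    · exact h
  obtain ⟨y, rfl⟩ : ∃ y, x = y + 1 := ⟨x - 1, by omega⟩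
  -- y < blen (else getD = true)
  have hylt : y < (qbody I).length := by
    by_contra hy
    have hy' : y = (qbody I).length := by omega
    rw [hy'] at hf
    rw [qb_getD_top I] at hf
    simp at hf
  rw [qb_getD I y hylt] at hf
  -- y ≥ 1 since qbody starts with true
  have hne : qbody I ≠ [] := by
    intro e; rw [e] at hylt; simp at hylt
  have hy1 : 1 ≤ y := by
    rcases Nat.eq_zero_or_pos y with rfl | h
    · rw [chain_first hch hne] at hf; simp at hf
    · exact h
  obtain ⟨p, rfl⟩ : ∃ p, y = p + 1 := ⟨y - 1, by omega⟩
  obtain ⟨g1, g2, g3, g4, g5, g6⟩ := chain_fa hch p hylt hf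
  refine ⟨by omega, by rw [qlen I]; omega, ?_, ?_, ?_, ?_⟩
  · -- getD (p+1) = qbody[p] = true
    show (qdirs I).getD (p+1) false = true
    rw [qb_getD I p (by omega)]; exact g1
  · -- getD p : if p = 0 then q0 else qbody[p-1]
    show (qdirs I).getD p false = true
    rcases Nat.eq_zero_or_pos p with rfl | hp
    · exact q0 I
    · obtain ⟨q, rfl⟩ : ∃ q, p = q + 1 := ⟨p - 1, by omega⟩
      rw [qb_getD I q (by omega)]
      exact g2 q rfl
  · -- getD (p+3) = qbody[p+2]
    show (qdirs I).getD (p+2+1) false = true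
    rw [qb_getD I (p+2) g3]; exact g4
  · -- getD (p+4) = qbody[p+3] or top
    show (qdirs I).getD (p+3+1) false = true
    rcases Nat.lt_or_ge (p+3) (qbody I).length with h | h
    · rw [qb_getD I (p+3) h]; exact g6 h
    · have : p + 3 = (qbody I).length := by omega
      rw [this]; exact qb_getD_top I

end QD
section DV
variable {A : Type} [DecidableEq A] {k : ℕ} {R : Set (Fin k → A)}

lemma plen_pos (a : A) (r : Fin k → A) : 0 < plen a r := by
  unfold plen; rw [qlen]; omega

/-- The vertex of `D(A)` at position `p` of path `P_(a,r)`. -/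
def vtx (a : A) (r : Fin k → A) (hr : r ∈ R) (p : ℕ) : DVert R :=
  if hp : 0 < p ∧ p < plen a r then .inner a r hr p hp.1 hp.2
  else if p = 0 then .base a else .top r hr

lemma vtx_zero (a : A) (r : Fin k → A) (hr : r ∈ R) : vtx a r hr 0 = .base a := by
  unfold vtx
  rw [dif_neg (by omega), if_pos rfl]

lemma vtx_top (a : A) (r : Fin k → A) (hr : r ∈ R) : vtx a r hr (plen a r) = .top r hr := by
  have := plen_pos a r
  unfold vtx
  rw [dif_neg (by omega), if_neg (by omega)]

lemma isAt_vtx (a : A) (r : Fin k → A) (hr : r ∈ R) {p : ℕ} (hp : p ≤ plen a r) :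
    isAt (vtx a r hr p) a r p := by
  unfold vtx
  split_ifs with h1 h2
  · exact ⟨rfl, rfl, rfl⟩
  · subst h2; exact ⟨rfl, rfl⟩
  · exact ⟨rfl, by omega⟩

lemma eq_vtx {v : DVert R} {a : A} {r : Fin k → A} {p : ℕ}
    (hv : isAt v a r p) (hr : r ∈ R) : v = vtx a r hr p := by
  cases v with
  | base a' =>
    obtain ⟨rfl, rfl⟩ := hv
    exact (vtx_zero _ _ _).symm
  | top r' h' =>
    obtain ⟨rfl, rfl⟩ := hv
    exact (vtx_top _ _ _).symm
  | inner a' r' h' j hj1 hj2 =>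
    obtain ⟨rfl, rfl, rfl⟩ := hv
    unfold vtx
    rw [dif_pos ⟨hj1, hj2⟩]

lemma pedge_dedge {a : A} {r : Fin k → A} (hr : r ∈ R) {α β : ℕ}
    (h : pedge (qdirs (idxSet a r)) α β) :
    dedge (vtx a r hr α) (vtx a r hr β) := by
  have hb : α ≤ plen a r ∧ β ≤ plen a r := by
    rcases h with ⟨h1, h2, _⟩ | ⟨h1, h2, _⟩ <;> unfold plen <;> omega
  exact ⟨a, r, hr, α, β, isAt_vtx a r hr hb.1, isAt_vtx a r hr hb.2, h⟩

lemma lvl_isAt {v : DVert R} {a : A} {r : Fin k → A} {x : ℕ} (hv : isAt v a r x) :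
    0 ≤ SS (qdirs (idxSet a r)) x ∧ (lvlD v : ℤ) = SS (qdirs (idxSet a r)) x := by
  cases v with
  | base a' =>
    obtain ⟨rfl, rfl⟩ := hv
    simp [lvlD, SS_zero]
  | top r' h' =>
    obtain ⟨he, rfl⟩ := hv
    subst he
    have h2 := qSS_len (idxSet a r')
    have hpl : plen a r' = (qdirs (idxSet a r')).length := rfl
    rw [hpl]
    constructor
    · omega
    · show ((k + 2 : ℕ) : ℤ) = _
      push_cast
      omega
  | inner a' r' h' j hj1 hj2 =>
    obtain ⟨h1, h2, h3⟩ := hv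
    rw [← h1, ← h2, h3]
    have hg := qSS_ge_one (idxSet a' r') (x := j) hj1
    refine ⟨by omega, ?_⟩
    show ((phgt (qdirs (idxSet a' r')) j).toNat : ℤ) = _
    rw [phgt_eq]
    exact Int.toNat_of_nonneg (by omega)

lemma dedge_lvl {u v : DVert R} (h : dedge u v) : lvlD v = lvlD u + 1 := by
  obtain ⟨a, r, hr, x, y, hu, hv, hp⟩ := h
  have Hu := lvl_isAt hu
  have Hv := lvl_isAt hv
  rcases hp with ⟨rfl, h2, h3⟩ | ⟨rfl, h2, h3⟩
  · have hs := SS_succ h2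
    rw [h3] at hs
    simp [sg] at hs
    omega
  · have hs := SS_succ h2
    rw [h3] at hs
    simp [sg] at hs
    omega

lemma zipWalk {m : ℕ} (w : List Bool) :
    ∀ (φ : Fin m → ℕ → DVert R),
      (∀ i, ∀ x, x < w.length →
        ((w.getD x false = true → dedge (φ i x) (φ i (x+1))) ∧
         (w.getD x false = false → dedge (φ i (x+1)) (φ i x)))) →
      connM (fun i => φ i 0) (fun i => φ i w.length) := by
  induction w with
  | nil => intro φ _; exact Relation.ReflTransGen.refl
  | cons b w ih =>
    intro φ h
    have hstep : (∀ i, dedge (φ i 0) (φ i 1)) ∨ (∀ i, dedge (φ i 1) (φ i 0)) := by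
      cases b with
      | true => exact Or.inl (fun i => (h i 0 (by simp)).1 rfl)
      | false => exact Or.inr (fun i => (h i 0 (by simp)).2 rfl)
    have htail := ih (fun i x => φ i (x+1)) (by
      intro i x hx
      have := h i (x+1) (by simpa using hx)
      simpa [List.getD_cons_succ] using this)
    exact Relation.ReflTransGen.head hstep htail
end DV

section Walks
variable {k : ℕ}

def ascW : ℕ → List Bool
  | 0 => []
  | 1 => [true]
  | (n+2) => true :: false :: true :: ascW (n+1)

def descW : ℕ → List Bool
  | 0 => []
  | 1 => [false]
  | (h+2) => false :: true :: false :: descW (h+1)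

lemma ascW_succ (n : ℕ) : ascW (n+2) = true :: false :: true :: ascW (n+1) := rfl
lemma descW_succ (n : ℕ) : descW (n+2) = false :: true :: false :: descW (n+1) := rfl

lemma asc (I : Finset (Fin k)) :
    ∀ n : ℕ, 1 ≤ n → ∀ j, j < (qdirs I).length → (qdirs I).getD j false = true →
      SS (qdirs I) j = (k + 2 : ℤ) - n →
      ∃ p : ℕ → ℕ, p 0 = j ∧ p ((ascW n).length) = (qdirs I).length ∧
        ∀ x < (ascW n).length,
          ((ascW n).getD x false = true → pedge (qdirs I) (p x) (p (x+1))) ∧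
          ((ascW n).getD x false = false → pedge (qdirs I) (p (x+1)) (p x)) := by
  intro n
  induction n with
  | zero => omega
  | succ n ih =>
    intro _ j hj hdj hSj
    have hS1 : SS (qdirs I) (j+1) = SS (qdirs I) j + 1 := by
      have := SS_succ hj
      rw [hdj] at this
      simpa [sg] using this
    cases n with
    | zero =>
      have hend : j + 1 = (qdirs I).length := by
        by_contra hne
        have hlt : j + 1 < (qdirs I).length := by omega
        have := qSS_le I hlt
        have := hSj
        push_cast at this
        omega
      refine ⟨fun x => match x with | 0 => j | _+1 => (qdirs I).length, rfl, rfl, ?_⟩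
      intro x hx
      have hx0 : x = 0 := by
        simp [ascW] at hx
        omega
      subst hx0
      refine ⟨fun _ => ?_, fun hl => by simp [ascW] at hl⟩
      show pedge (qdirs I) j ((qdirs I).length)
      exact Or.inl ⟨by omega, hj, hdj⟩
    | succ n' =>
      have hj1lt : j + 1 < (qdirs I).length := by
        by_contra hne
        have he : j + 1 = (qdirs I).length := by
          have : j + 1 ≤ (qdirs I).length := hj
          omega
        have h2 := qSS_len I
        rw [← he] at h2
        push_cast at hSj
        omega
      by_cases hb : (qdirs I).getD (j+1) false = true
      · obtain ⟨p', hp0, hpL, hpc⟩ := ih (by omega) (j+1) hj1lt hb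
          (by push_cast at hSj ⊢; omega)
        refine ⟨fun x => match x with | 0 => j | 1 => j+1 | 2 => j | (x+3) => p' x,
          rfl, ?_, ?_⟩
        · rw [ascW_succ]
          simp only [List.length_cons]
          exact hpL
        · intro x hx
          rcases x with _ | _ | _ | x
          · refine ⟨fun _ => ?_, fun hl => by simp [ascW_succ] at hl⟩
            show pedge (qdirs I) j (j+1)
            exact Or.inl ⟨rfl, hj, hdj⟩
          · refine ⟨fun ht => by simp [ascW_succ] at ht, fun _ => ?_⟩
            show pedge (qdirs I) j (j+1)
            exact Or.inl ⟨rfl, hj, hdj⟩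
          · refine ⟨fun _ => ?_, fun hl => by simp [ascW_succ] at hl⟩
            show pedge (qdirs I) j (p' 0)
            rw [hp0]
            exact Or.inl ⟨rfl, hj, hdj⟩
          · rw [ascW_succ] at hx
            simp only [List.length_cons] at hx
            exact hpc x (by omega)
      · have hbf : (qdirs I).getD (j+1) false = false := by
          revert hb
          cases ((qdirs I).getD (j+1) false) <;> simp
        obtain ⟨hf1, hf2, hf3, hf4, hf5, hf6⟩ := qfa I hj1lt hbf
        have e1 := SS_succ (l := qdirs I) (x := j+1) (by omega)
        rw [hbf] at e1
        simp [sg] at e1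
        have e2 := SS_succ (l := qdirs I) (x := j+2) (by rw [qlen] at hf2 ⊢; omega)
        rw [hf5] at e2
        simp [sg] at e2
        have b1 : SS (qdirs I) (j+1+1) = SS (qdirs I) (j+2) := rfl
        have b2 : SS (qdirs I) (j+2+1) = SS (qdirs I) (j+3) := rfl
        have hj3lt : j + 3 < (qdirs I).length := by
          by_contra hne
          have he : j + 3 = (qdirs I).length := by omega
          have h2 := qSS_len I
          rw [← he] at h2
          push_cast at hSj
          omega
        obtain ⟨p', hp0, hpL, hpc⟩ := ih (by omega) (j+3) hj3lt hf6
          (by push_cast at hSj ⊢; omega)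
        refine ⟨fun x => match x with | 0 => j | 1 => j+1 | 2 => j+2 | (x+3) => p' x,
          rfl, ?_, ?_⟩
        · rw [ascW_succ]
          simp only [List.length_cons]
          exact hpL
        · intro x hx
          rcases x with _ | _ | _ | x
          · refine ⟨fun _ => ?_, fun hl => by simp [ascW_succ] at hl⟩
            show pedge (qdirs I) j (j+1)
            exact Or.inl ⟨rfl, hj, hdj⟩
          · refine ⟨fun ht => by simp [ascW_succ] at ht, fun _ => ?_⟩
            show pedge (qdirs I) (j+2) (j+1)
            exact Or.inr ⟨rfl, hj1lt, hbf⟩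
          · refine ⟨fun _ => ?_, fun hl => by simp [ascW_succ] at hl⟩
            show pedge (qdirs I) (j+2) (p' 0)
            rw [hp0]
            exact Or.inl ⟨rfl, by omega, hf5⟩
          · rw [ascW_succ] at hx
            simp only [List.length_cons] at hx
            exact hpc x (by omega)

lemma desc (I : Finset (Fin k)) :
    ∀ h : ℕ, 1 ≤ h → ∀ j, j + 1 ≤ (qdirs I).length → (qdirs I).getD j false = true →
      SS (qdirs I) (j+1) = (h : ℤ) →
      ∃ p : ℕ → ℕ, p 0 = j + 1 ∧ p ((descW h).length) = 0 ∧
        ∀ x < (descW h).length,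
          ((descW h).getD x false = true → pedge (qdirs I) (p x) (p (x+1))) ∧
          ((descW h).getD x false = false → pedge (qdirs I) (p (x+1)) (p x)) := by
  intro h
  induction h with
  | zero => omega
  | succ h ih =>
    intro _ j hj hdj hSj
    have hjlt : j < (qdirs I).length := by omega
    have hS : SS (qdirs I) (j+1) = SS (qdirs I) j + 1 := by
      have := SS_succ hjlt
      rw [hdj] at this
      simpa [sg] using this
    cases h with
    | zero =>
      have hj0 : j = 0 := by
        by_contra hne
        have := qSS_ge_one I (x := j) (by omega)
        push_cast at hSj
        omega
      subst hj0
      refine ⟨fun x => match x with | 0 => 1 | _+1 => 0, rfl, rfl, ?_⟩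
      intro x hx
      have hx0 : x = 0 := by
        simp [descW] at hx
        omega
      subst hx0
      refine ⟨fun ht => by simp [descW] at ht, fun _ => ?_⟩
      show pedge (qdirs I) 0 1
      exact Or.inl ⟨rfl, hjlt, hdj⟩
    | succ h' =>
      have hj1 : 1 ≤ j := by
        by_contra hne
        have : j = 0 := by omega
        subst this
        rw [SS_zero] at hS
        have b0 : SS (qdirs I) (0+1) = SS (qdirs I) 1 := rfl
        push_cast at hSj
        omega
      obtain ⟨j'', rfl⟩ : ∃ t, j = t + 1 := ⟨j - 1, by omega⟩
      by_cases hb : (qdirs I).getD j'' false = true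
      · have hSx : SS (qdirs I) (j''+1) = ((h'+1 : ℕ) : ℤ) := by
          push_cast at hSj ⊢
          omega
        obtain ⟨p', hp0, hpL, hpc⟩ := ih (by omega) j'' (by omega) hb hSx
        refine ⟨fun x => match x with | 0 => j''+2 | 1 => j''+1 | 2 => j''+2 | (x+3) => p' x,
          rfl, ?_, ?_⟩
        · rw [descW_succ]
          simp only [List.length_cons]
          exact hpL
        · intro x hx
          rcases x with _ | _ | _ | x
          · refine ⟨fun ht => by simp [descW_succ] at ht, fun _ => ?_⟩
            show pedge (qdirs I) (j''+1) (j''+2)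
            exact Or.inl ⟨rfl, hjlt, hdj⟩
          · refine ⟨fun _ => ?_, fun hl => by simp [descW_succ] at hl⟩
            show pedge (qdirs I) (j''+1) (j''+2)
            exact Or.inl ⟨rfl, hjlt, hdj⟩
          · refine ⟨fun ht => by simp [descW_succ] at ht, fun _ => ?_⟩
            show pedge (qdirs I) (p' 0) (j''+2)
            rw [hp0]
            exact Or.inl ⟨rfl, hjlt, hdj⟩
          · rw [descW_succ] at hx
            simp only [List.length_cons] at hx
            exact hpc x (by omega)
      · have hbf : (qdirs I).getD j'' false = false := by
          revert hb
          cases ((qdirs I).getD j'' false) <;> simp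
        obtain ⟨hf1, hf2, hf3, hf4, hf5, hf6⟩ := qfa I (by omega) hbf
        obtain ⟨j₃, rfl⟩ : ∃ t, j'' = t + 2 := ⟨j'' - 2, by omega⟩
        have hf3' : (qdirs I).getD (j₃+1) false = true := hf3
        have hf4' : (qdirs I).getD j₃ false = true := hf4
        have e1 := SS_succ (l := qdirs I) (x := j₃+2) (by omega)
        rw [hbf] at e1
        simp [sg] at e1
        have e2 := SS_succ (l := qdirs I) (x := j₃+1) (by omega)
        rw [hf3'] at e2
        simp [sg] at e2
        have b1 : SS (qdirs I) (j₃+1+1) = SS (qdirs I) (j₃+2) := rfl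
        have b2 : SS (qdirs I) (j₃+2+1) = SS (qdirs I) (j₃+3) := rfl
        have b3 : SS (qdirs I) (j₃+2+1+1) = SS (qdirs I) (j₃+4) := rfl
        have hSx : SS (qdirs I) (j₃+1) = ((h'+1 : ℕ) : ℤ) := by
          push_cast at hSj ⊢
          omega
        obtain ⟨p', hp0, hpL, hpc⟩ := ih (by omega) j₃ (by omega) hf4' hSx
        refine ⟨fun x => match x with | 0 => j₃+4 | 1 => j₃+3 | 2 => j₃+2 | (x+3) => p' x,
          rfl, ?_, ?_⟩
        · rw [descW_succ]
          simp only [List.length_cons]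
          exact hpL
        · intro x hx
          rcases x with _ | _ | _ | x
          · refine ⟨fun ht => by simp [descW_succ] at ht, fun _ => ?_⟩
            show pedge (qdirs I) (j₃+3) (j₃+4)
            exact Or.inl ⟨rfl, by rw [qlen] at hj ⊢; omega, hdj⟩
          · refine ⟨fun _ => ?_, fun hl => by simp [descW_succ] at hl⟩
            show pedge (qdirs I) (j₃+3) (j₃+2)
            exact Or.inr ⟨rfl, by rw [qlen] at hj ⊢; omega, hbf⟩
          · refine ⟨fun ht => by simp [descW_succ] at ht, fun _ => ?_⟩
            show pedge (qdirs I) (p' 0) (j₃+2)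
            rw [hp0]
            exact Or.inl ⟨rfl, by rw [qlen] at hj ⊢; omega, hf3'⟩
          · rw [descW_succ] at hx
            simp only [List.length_cons] at hx
            exact hpc x (by omega)
end Walks
end CompAux

open CompAux in
/-- If a connected component `Γ` of `D(A)^m` contains a tuple `c` whose entries all
have the same level, then every tuple of `Γ` has entries of constant level, and
either `Γ` is the diagonal component `Δ_m` or `Γ` is a singleton. -/
theorem component_of_level_tuple {A : Type} [DecidableEq A] {k : ℕ}
    (R : Set (Fin k → A)) {m : ℕ}
    (c : Fin m → DVert R) (hc : ∀ i j, lvlD (c i) = lvlD (c j)) :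
    (∀ d, connM c d → ∀ i j, lvlD (d i) = lvlD (d j)) ∧
    ((∃ e : DVert R, connM c (fun _ => e)) ∨ (∀ d, connM c d → d = c)) := by
  constructor
  · intro d hcd
    induction hcd with
    | refl => exact hc
    | tail hb hstep ih =>
      rcases hstep with h | h <;> intro i j <;>
        [ (have hi := dedge_lvl (h i); have hj := dedge_lvl (h j); have := ih i j; omega);
          (have hi := dedge_lvl (h i); have hj := dedge_lvl (h j); have := ih i j; omega)]
  · rcases Nat.eq_zero_or_pos m with hm | hm
    · subst hm
      exact Or.inr (fun d _ => funext fun i => i.elim0)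
    by_cases hstep : ∃ y : Fin m → DVert R,
        (∀ i, dedge (c i) (y i)) ∨ (∀ i, dedge (y i) (c i))
    case neg =>
      refine Or.inr (fun d hcd => ?_)
      rcases Relation.ReflTransGen.cases_head hcd with h | ⟨y, hy, -⟩
      · exact h.symm
      · exact absurd ⟨y, hy⟩ hstep
    case pos =>
      left
      have i₀ : Fin m := ⟨0, hm⟩
      obtain ⟨y, hy | hy⟩ := hstep
      · -- upward step : every c i has an out-edge
        simp only [dedge] at hy
        choose a r hr x x' hu hv hp using hy
        have key : ∀ i, x i < (qdirs (idxSet (a i) (r i))).length ∧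
            (qdirs (idxSet (a i) (r i))).getD (x i) false = true := by
          intro i
          rcases hp i with ⟨he, hlt, hd⟩ | ⟨he, hlt, hd⟩
          · exact ⟨hlt, hd⟩
          · obtain ⟨g1, g2, g3, g4, g5, g6⟩ := qfa _ hlt hd
            refine ⟨by omega, ?_⟩
            rw [he]
            exact g5
        have hSx : ∀ i, SS (qdirs (idxSet (a i) (r i))) (x i) = (lvlD (c i₀) : ℤ) := by
          intro i
          have h := (lvl_isAt (hu i)).2
          rw [hc i i₀] at h
          exact h.symm
        have hlk : lvlD (c i₀) ≤ k + 1 := by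
          have h1 := qSS_le _ (key i₀).1
          have h2 := hSx i₀
          omega
        have hn : 1 ≤ k + 2 - lvlD (c i₀) := by omega
        have walks : ∀ i, ∃ p : ℕ → ℕ, p 0 = x i ∧
            p ((ascW (k + 2 - lvlD (c i₀))).length) = (qdirs (idxSet (a i) (r i))).length ∧
            ∀ t < (ascW (k + 2 - lvlD (c i₀))).length,
              ((ascW (k + 2 - lvlD (c i₀))).getD t false = true →
                pedge (qdirs (idxSet (a i) (r i))) (p t) (p (t+1))) ∧
              ((ascW (k + 2 - lvlD (c i₀))).getD t false = false →
                pedge (qdirs (idxSet (a i) (r i))) (p (t+1)) (p t)) := by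
          intro i
          refine asc _ _ hn (x i) (key i).1 (key i).2 ?_
          have := hSx i
          omega
        choose p hp0 hpL hpc using walks
        have leg1 := zipWalk (R := R) (ascW (k + 2 - lvlD (c i₀)))
          (fun i t => vtx (a i) (r i) (hr i) (p i t))
          (by
            intro i t ht
            exact ⟨fun hb => pedge_dedge (hr i) ((hpc i t ht).1 hb),
                   fun hb => pedge_dedge (hr i) ((hpc i t ht).2 hb)⟩)
        have e0 : (fun i => vtx (a i) (r i) (hr i) (p i 0)) = c := by
          funext i
          rw [hp0 i]
          exact (eq_vtx (hu i) (hr i)).symm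
        have e1 : (fun i => vtx (a i) (r i) (hr i) (p i ((ascW (k + 2 - lvlD (c i₀))).length)))
            = (fun i => DVert.top (r i) (hr i)) := by
          funext i
          rw [hpL i]
          exact vtx_top (a i) (r i) (hr i)
        rw [e0, e1] at leg1
        -- second leg : descend along the paths P_(a i₀, r i) to the base a i₀
        have walks2 : ∀ i, ∃ p' : ℕ → ℕ,
            p' 0 = (qbody (idxSet (a i₀) (r i))).length + 1 + 1 ∧
            p' ((descW (k+2)).length) = 0 ∧
            ∀ t < (descW (k+2)).length,
              ((descW (k+2)).getD t false = true →
                pedge (qdirs (idxSet (a i₀) (r i))) (p' t) (p' (t+1))) ∧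
              ((descW (k+2)).getD t false = false →
                pedge (qdirs (idxSet (a i₀) (r i))) (p' (t+1)) (p' t)) := by
          intro i
          refine desc _ (k+2) (by omega) ((qbody (idxSet (a i₀) (r i))).length + 1)
            (by rw [qlen]) (qb_getD_top _) ?_
          have h1 := qSS_len (idxSet (a i₀) (r i))
          have h2 := qlen (idxSet (a i₀) (r i))
          have b : SS (qdirs (idxSet (a i₀) (r i))) ((qbody (idxSet (a i₀) (r i))).length + 1 + 1)
              = SS (qdirs (idxSet (a i₀) (r i))) ((qbody (idxSet (a i₀) (r i))).length + 2) := rfl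
          rw [h2] at h1
          push_cast
          omega
        choose p2 hq0 hqL hqc using walks2
        have leg2 := zipWalk (R := R) (descW (k+2))
          (fun i t => vtx (a i₀) (r i) (hr i) (p2 i t))
          (by
            intro i t ht
            exact ⟨fun hb => pedge_dedge (hr i) ((hqc i t ht).1 hb),
                   fun hb => pedge_dedge (hr i) ((hqc i t ht).2 hb)⟩)
        have e2 : (fun i => vtx (a i₀) (r i) (hr i) (p2 i 0))
            = (fun i => DVert.top (r i) (hr i)) := by
          funext i
          rw [hq0 i]
          have hpl : plen (a i₀) (r i) = (qbody (idxSet (a i₀) (r i))).length + 2 := qlen _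
          rw [show (qbody (idxSet (a i₀) (r i))).length + 1 + 1 = plen (a i₀) (r i) by omega]
          exact vtx_top (a i₀) (r i) (hr i)
        have e3 : (fun i => vtx (a i₀) (r i) (hr i) (p2 i ((descW (k+2)).length)))
            = (fun _ => DVert.base (a i₀)) := by
          funext i
          rw [hqL i]
          exact vtx_zero (a i₀) (r i) (hr i)
        rw [e2, e3] at leg2
        exact ⟨DVert.base (a i₀), leg1.trans leg2⟩
      · -- downward step : every c i has an in-edge
        simp only [dedge] at hy
        choose a r hr u x hu hv hp using hy
        have key : ∀ i, ∃ j', x i = j' + 1 ∧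
            j' + 1 ≤ (qdirs (idxSet (a i) (r i))).length ∧
            (qdirs (idxSet (a i) (r i))).getD j' false = true := by
          intro i
          rcases hp i with ⟨he, hlt, hd⟩ | ⟨he, hlt, hd⟩
          · exact ⟨u i, he, by omega, hd⟩
          · obtain ⟨g1, g2, g3, g4, g5, g6⟩ := qfa _ hlt hd
            refine ⟨x i - 1, by omega, by omega, ?_⟩
            exact g3
        choose j' hj1 hj2 hj3 using key
        have hSx : ∀ i, SS (qdirs (idxSet (a i) (r i))) (j' i + 1) = (lvlD (c i₀) : ℤ) := by
          intro i
          have h := (lvl_isAt (hv i)).2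
          rw [hc i i₀] at h
          rw [hj1 i] at h
          exact h.symm
        have hl1 : 1 ≤ lvlD (c i₀) := by
          have h1 := qSS_ge_one (idxSet (a i₀) (r i₀)) (x := j' i₀ + 1) (by omega)
          have h2 := hSx i₀
          omega
        have walks := fun i => desc (idxSet (a i) (r i)) (lvlD (c i₀)) hl1 (j' i)
          (hj2 i) (hj3 i) (hSx i)
        choose p hp0 hpL hpc using walks
        have leg1 := zipWalk (R := R) (descW (lvlD (c i₀)))
          (fun i t => vtx (a i) (r i) (hr i) (p i t))
          (by
            intro i t ht
            exact ⟨fun hb => pedge_dedge (hr i) ((hpc i t ht).1 hb),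
                   fun hb => pedge_dedge (hr i) ((hpc i t ht).2 hb)⟩)
        have e0 : (fun i => vtx (a i) (r i) (hr i) (p i 0)) = c := by
          funext i
          rw [hp0 i]
          have h := (eq_vtx (hv i) (hr i)).symm
          rw [hj1 i] at h
          exact h
        have e1 : (fun i => vtx (a i) (r i) (hr i) (p i ((descW (lvlD (c i₀))).length)))
            = (fun i => DVert.base (a i)) := by
          funext i
          rw [hpL i]
          exact vtx_zero (a i) (r i) (hr i)
        rw [e0, e1] at leg1
        -- second leg : ascend along the paths P_(a i, r i₀) to the top r i₀
        have walks2 : ∀ i, ∃ p' : ℕ → ℕ, p' 0 = 0 ∧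
            p' ((ascW (k+2)).length) = (qdirs (idxSet (a i) (r i₀))).length ∧
            ∀ t < (ascW (k+2)).length,
              ((ascW (k+2)).getD t false = true →
                pedge (qdirs (idxSet (a i) (r i₀))) (p' t) (p' (t+1))) ∧
              ((ascW (k+2)).getD t false = false →
                pedge (qdirs (idxSet (a i) (r i₀))) (p' (t+1)) (p' t)) := by
          intro i
          refine asc _ (k+2) (by omega) 0 (by rw [qlen]; omega) (q0 _) ?_
          rw [SS_zero]
          push_cast
          ring
        choose p2 hq0 hqL hqc using walks2
        have leg2 := zipWalk (R := R) (ascW (k+2))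
          (fun i t => vtx (a i) (r i₀) (hr i₀) (p2 i t))
          (by
            intro i t ht
            exact ⟨fun hb => pedge_dedge (hr i₀) ((hqc i t ht).1 hb),
                   fun hb => pedge_dedge (hr i₀) ((hqc i t ht).2 hb)⟩)
        have e2 : (fun i => vtx (a i) (r i₀) (hr i₀) (p2 i 0))
            = (fun i => DVert.base (a i)) := by
          funext i
          rw [hq0 i]
          exact vtx_zero (a i) (r i₀) (hr i₀)
        have e3 : (fun i => vtx (a i) (r i₀) (hr i₀) (p2 i ((ascW (k+2)).length)))
            = (fun _ => DVert.top (r i₀) (hr i₀)) := by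
          funext i
          rw [hqL i]
          exact vtx_top (a i) (r i₀) (hr i₀)
        rw [e2, e3] at leg2
        exact ⟨DVert.top (r i₀) (hr i₀), leg1.trans leg2⟩
end

section
/- Let C, D be subsets of the vertex set of D(A) such that every x ∈ C has some y' ∈ D with x → y', and every y ∈ D has some x' ∈ C with x' → y. If D ⊄ R and c, d are the ⊑-minimal elements of C and D respectively, then c → d is an edge of D(A). -/
/-- Lexicographic (strict) order on tuples, induced by a linear order on `A`. -/
def lexLt {A : Type} [LinearOrder A] {k : ℕ} (r s : Fin k → A) : Prop :=
  ∃ i, r i < s i ∧ ∀ j, j < i → r j = s j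

/-- Lexicographic (strict) order on `A × R`. -/
def pairLexLt {A : Type} [LinearOrder A] {k : ℕ}
    (p q : A × (Fin k → A)) : Prop :=
  p.1 < q.1 ∨ (p.1 = q.1 ∧ lexLt p.2 q.2)

/-- The linear order `⊑` on the vertices of `D(A)`: `x ⊏ y` iff (1) `x, y ∈ A` and
`x ≺ y`, or (2) `x, y ∈ R` and `x ≺_LEX y`, or (3) `lvl x < lvl y`, or
`lvl x = lvl y`, `x, y ∉ A ∪ R`, `x ∈ P_(a,r)`, `y ∈ P_(b,s)` and either
(4) `(a,r) = (b,s)` and `x` is closer to the initial vertex than `y`, or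
(5) `(a,r) ≺_LEX (b,s)`. -/
def sqlt {A : Type} [LinearOrder A] {k : ℕ} {R : Set (Fin k → A)}
    (x y : DVert R) : Prop :=
  (∃ a b, x = DVert.base a ∧ y = DVert.base b ∧ a < b) ∨
  (∃ r hr s hs, x = DVert.top r hr ∧ y = DVert.top s hs ∧ lexLt r s) ∨
  (lvlD x < lvlD y) ∨
  (lvlD x = lvlD y ∧ ∃ a r hr j h1 h2 b s hs j' h1' h2',
    x = DVert.inner a r hr j h1 h2 ∧ y = DVert.inner b s hs j' h1' h2' ∧
    (((a, r) = (b, s) ∧ j < j') ∨ pairLexLt (a, r) (b, s)))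


/-! Every edge of `D(A)` raises the level by exactly one and `⊑` refines the level order, so
for edges `c → y'` with `y' ∈ D` and `x' → d` with `x' ∈ C`, minimality forces
`lvl c = lvl x'` and `lvl d = lvl y'`. If neither `x' = c` nor `y' = d`, then `c ⊏ x'` and
`d ⊏ y'` within a level; `d` is not in `R`, so `d` and `y'` are inner vertices. Both edges
stay on the connecting path of their inner end: if the two paths differ, the two strict
comparisons contradict the lexicographic order on `A × R`; if they coincide, the edges
would cross, i.e. run along one edge of the path in both directions. -/
namespace List

/-- Net height of an oriented path with direction pattern `l` (`true` is a forward edge). -/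
def height (l : List Bool) : ℤ := (l.count true : ℤ) - (l.count false : ℤ)

@[simp] lemma height_nil : height [] = 0 := rfl

@[simp] lemma height_cons (b : Bool) (l : List Bool) :
    height (b :: l) = (if b then 1 else -1) + height l := by
  cases b <;> simp [height] <;> ring

lemma height_append (l₁ l₂ : List Bool) :
    height (l₁ ++ l₂) = height l₁ + height l₂ := by
  simp only [height, count_append]; push_cast; ring

lemma height_flatten (L : List (List Bool)) (hL : ∀ b ∈ L, height b = 1) :
    height L.flatten = L.length := by
  induction L with
  | nil => rfl
  | cons b L ih =>
    simp only [flatten_cons, height_append, length_cons, hL b mem_cons_self,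
      ih fun b' hb' => hL b' (mem_cons_of_mem b hb')]
    push_cast; ring

lemma height_take_flatten_mem_Icc (L : List (List Bool))
    (hL : ∀ b ∈ L, (∀ j, height (b.take j) ∈ Set.Icc 0 1) ∧ height b = 1) (j : ℕ) :
    height (L.flatten.take j) ∈ Set.Icc 0 (L.length : ℤ) := by
  induction L generalizing j with
  | nil => simp
  | cons b L ih =>
    obtain ⟨hb, hb1⟩ := hL b mem_cons_self
    have ih' := ih (fun b' hb' => hL b' (mem_cons_of_mem b hb')) (j - b.length)
    rw [flatten_cons, take_append, height_append]
    simp only [Set.mem_Icc, length_cons] at hb ih' ⊢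
    push_cast
    rcases lt_or_ge j b.length with hj | hj
    · rw [Nat.sub_eq_zero_of_le hj.le, take_zero, height_nil]
      have := hb j; constructor <;> linarith [this.1, this.2, ih'.1]
    · rw [take_of_length_le hj, hb1]
      constructor <;> linarith [ih'.1, ih'.2]

lemma take_succ_eq_append_getD {ds : List Bool} {x : ℕ} (hx : x < ds.length) :
    ds.take (x + 1) = ds.take x ++ [ds.getD x false] := by
  rw [take_add_one, getD_eq_getElem?_getD, getElem?_eq_getElem hx]; rfl

end List

open List

lemma phgt_eq_height (ds : List Bool) (x : ℕ) : phgt ds x = (ds.take x).height := rfl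

lemma phgt_of_pedge {ds : List Bool} {x y : ℕ} (h : pedge ds x y) :
    phgt ds y = phgt ds x + 1 := by
  simp only [phgt_eq_height]
  rcases h with ⟨rfl, hx, hd⟩ | ⟨rfl, hy, hd⟩
  · rw [take_succ_eq_append_getD hx, height_append, hd]; simp
  · rw [take_succ_eq_append_getD hy, height_append, hd]; simp

lemma pedge_mono {ds : List Bool} {x y x' y' : ℕ} (h : pedge ds x y) (h' : pedge ds x' y')
    (hx : x < x') : y ≤ y' := by
  unfold pedge at h h'
  rcases h with ⟨rfl, -, hd⟩ | ⟨rfl, -, -⟩ <;>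
    rcases h' with ⟨rfl, -, -⟩ | ⟨rfl, -, hd'⟩ <;> try omega
  by_contra hlt
  obtain rfl : y' = x := by omega
  simp_all

/-- `qdirs I` cut into `k + 2` blocks, each climbing from height `0` to `1` inside `[0, 1]`. -/
def qblocks {k : ℕ} (I : Finset (Fin k)) : List (List Bool) :=
  [[true]] ++ (List.finRange k).map (fun l => if l ∈ I then [true] else [true, false, true]) ++
    [[true]]

lemma qdirs_eq_flatten {k : ℕ} (I : Finset (Fin k)) : qdirs I = (qblocks I).flatten := by
  simp [qdirs, qblocks, flatMap_def]

lemma qblocks_spec {k : ℕ} (I : Finset (Fin k)) :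
    ∀ b ∈ qblocks I, (∀ j, height (b.take j) ∈ Set.Icc 0 1) ∧ height b = 1 := by
  have single : ∀ j, height ([true].take j) ∈ Set.Icc 0 1 := by
    rintro (_ | j) <;> simp
  have zigzag : ∀ j, height ([true, false, true].take j) ∈ Set.Icc 0 1 := by
    rintro (_ | _ | _ | j) <;> simp
  intro b hb
  simp only [qblocks, mem_append, mem_map, mem_singleton] at hb
  rcases hb with (rfl | ⟨l, -, rfl⟩) | rfl
  · exact ⟨single, by simp⟩
  · split_ifs
    · exact ⟨single, by simp⟩
    · exact ⟨zigzag, by simp⟩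
  · exact ⟨single, by simp⟩

lemma phgt_qdirs_mem_Icc {k : ℕ} (I : Finset (Fin k)) (j : ℕ) :
    phgt (qdirs I) j ∈ Set.Icc 0 ((k : ℤ) + 2) := by
  rw [phgt_eq_height, qdirs_eq_flatten]
  convert height_take_flatten_mem_Icc _ (qblocks_spec I) j using 2
  simp [qblocks]; ring

lemma phgt_qdirs_length {k : ℕ} (I : Finset (Fin k)) :
    phgt (qdirs I) (qdirs I).length = (k : ℤ) + 2 := by
  rw [phgt_eq_height, take_length, qdirs_eq_flatten,
    height_flatten _ fun b hb => (qblocks_spec I b hb).2]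
  simp [qblocks]; ring

section Digraph

variable {A : Type} {k : ℕ} {R : Set (Fin k → A)}

section DecidableEq

variable [DecidableEq A]

lemma lvlD_eq_phgt_of_isAt {v : DVert R} {a : A} {r : Fin k → A} {x : ℕ} (h : isAt v a r x) :
    (lvlD v : ℤ) = phgt (qdirs (idxSet a r)) x := by
  cases v with
  | base a' =>
    obtain ⟨rfl, rfl⟩ := (h : a' = a ∧ x = 0)
    rfl
  | top r' _ =>
    obtain ⟨rfl, rfl⟩ := (h : r' = r ∧ x = plen a r)
    rw [plen, phgt_qdirs_length]
    rfl
  | inner a' r' _ j _ _ =>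
    obtain ⟨rfl, rfl, rfl⟩ := (h : a' = a ∧ r' = r ∧ x = j)
    exact Int.toNat_of_nonneg (phgt_qdirs_mem_Icc _ _).1

lemma lvlD_of_dedge {u v : DVert R} (h : dedge u v) : lvlD v = lvlD u + 1 := by
  obtain ⟨a, r, -, x, y, hu, hv, hp⟩ := h
  have := phgt_of_pedge hp
  have := lvlD_eq_phgt_of_isAt hu
  have := lvlD_eq_phgt_of_isAt hv
  omega

lemma lvlD_le (v : DVert R) : lvlD v ≤ k + 2 := by
  cases v with
  | base _ => simp [lvlD]
  | top _ _ => exact le_rfl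
  | inner a r _ j _ _ =>
    have := (phgt_qdirs_mem_Icc (idxSet a r) j).2
    simp only [lvlD]
    omega

lemma not_dedge_top {r : Fin k → A} {hr : r ∈ R} {v : DVert R} :
    ¬ dedge (DVert.top r hr) v := fun h => by
  have := lvlD_of_dedge h
  have := lvlD_le v
  simp only [lvlD] at *
  omega

lemma not_dedge_base {a : A} {u : DVert R} : ¬ dedge u (DVert.base a) := fun h => by
  have := lvlD_of_dedge h
  simp [lvlD] at this

lemma exists_pedge_of_dedge_inner {u : DVert R} {b : A} {s : Fin k → A} {hs : s ∈ R} {j : ℕ}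
    {h1 : 0 < j} {h2 : j < plen b s} (h : dedge u (DVert.inner b s hs j h1 h2)) :
    ∃ x, isAt u b s x ∧ pedge (qdirs (idxSet b s)) x j := by
  obtain ⟨a, r, -, x, y, hu, ⟨rfl, rfl, rfl⟩, hp⟩ := h
  exact ⟨x, hu, hp⟩

end DecidableEq

variable [LinearOrder A]

lemma lexLt_iff_toLex_lt {r s : Fin k → A} : lexLt r s ↔ toLex r < toLex s :=
  exists_congr fun _ => and_comm

lemma pairLexLt_iff_toLex_lt {p q : A × (Fin k → A)} :
    pairLexLt p q ↔ toLex (p.1, toLex p.2) < toLex (q.1, toLex q.2) := by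
  rw [Prod.Lex.toLex_lt_toLex, pairLexLt, lexLt_iff_toLex_lt]

lemma pairLexLt_asymm {p q : A × (Fin k → A)} (h : pairLexLt p q) : ¬ pairLexLt q p := by
  rw [pairLexLt_iff_toLex_lt] at h ⊢
  exact h.not_gt

lemma pairLexLt_irrefl (p : A × (Fin k → A)) : ¬ pairLexLt p p := by
  rw [pairLexLt_iff_toLex_lt]
  exact lt_irrefl _

lemma lvlD_le_of_sqlt {u v : DVert R} (h : sqlt u v) : lvlD u ≤ lvlD v := by
  rcases h with ⟨a, b, rfl, rfl, -⟩ | ⟨r, hr, s, hs, rfl, rfl, -⟩ | h | ⟨h, -⟩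
  · exact le_rfl
  · exact le_rfl
  · exact h.le
  · exact h.le

lemma exists_inner_of_sqlt_inner {a : A} {r : Fin k → A} {hr : r ∈ R} {j : ℕ} {h1 : 0 < j}
    {h2 : j < plen a r} {v : DVert R} (h : sqlt (DVert.inner a r hr j h1 h2) v)
    (hlvl : lvlD (DVert.inner a r hr j h1 h2) = lvlD v) :
    ∃ b s hs j' h1' h2', v = DVert.inner b s hs j' h1' h2' ∧
      (((a, r) = (b, s) ∧ j < j') ∨ pairLexLt (a, r) (b, s)) := by
  rcases h with ⟨_, _, ⟨⟩, -⟩ | ⟨_, _, _, _, ⟨⟩, -⟩ | h |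
    ⟨-, _, _, _, _, _, _, b, s, hs, j', h1', h2', ⟨⟩, rfl, h⟩
  · omega
  · exact ⟨b, s, hs, j', h1', h2', rfl, h⟩

lemma ne_top_of_minimal {D : Set (DVert R)} {d : DVert R} (hd : ∀ y ∈ D, y = d ∨ sqlt d y)
    (hD : ¬ D ⊆ {v : DVert R | ∃ r hr, v = DVert.top r hr}) (s : Fin k → A) (hs : s ∈ R) :
    d ≠ DVert.top s hs := by
  rintro rfl
  obtain ⟨y, hyD, hy⟩ := Set.not_subset.mp hD
  rcases hd y hyD with rfl | ⟨_, _, ⟨⟩, -⟩ | ⟨_, _, s', hs', -, rfl, -⟩ | h |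
    ⟨-, _, _, _, _, _, _, _, _, _, _, _, _, ⟨⟩, -⟩
  · exact hy ⟨s, hs, rfl⟩
  · exact hy ⟨s', hs', rfl⟩
  · exact absurd (lvlD_le y) (not_le.mpr h)

lemma not_sqlt_of_dedge_of_sqlt {u u' v v' : DVert R} (hu : sqlt u u') (hlvl : lvlD u = lvlD u')
    (huv : dedge u v) (huv' : dedge u' v') (hv' : ∀ s hs, v' ≠ DVert.top s hs) :
    ¬ sqlt v' v := by
  intro hv
  have hlvl' : lvlD v' = lvlD v := by rw [lvlD_of_dedge huv, lvlD_of_dedge huv', hlvl]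
  cases v' with
  | base => exact not_dedge_base huv'
  | top s hs => exact hv' s hs rfl
  | inner b s hs j' =>
    obtain ⟨a', s', _, jy, _, _, rfl, hord⟩ := exists_inner_of_sqlt_inner hv hlvl'
    obtain ⟨x', hx', hp'⟩ := exists_pedge_of_dedge_inner huv'
    obtain ⟨x, hx, hp⟩ := exists_pedge_of_dedge_inner huv
    rcases hu with ⟨a₀, b₀, rfl, rfl, hab⟩ | ⟨r, hr, -, -, rfl, -, -⟩ | hlt |
      ⟨-, a, r, _, j, _, _, b₀, s₀, _, jx, _, _, rfl, rfl, hord'⟩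
    · obtain ⟨rfl, -⟩ := (hx : a₀ = a' ∧ x = 0)
      obtain ⟨rfl, -⟩ := (hx' : b₀ = b ∧ x' = 0)
      rcases hord with ⟨heq, -⟩ | hlt | ⟨heq, -⟩
      · exact hab.ne' (congrArg Prod.fst heq)
      · exact hlt.not_gt hab
      · exact hab.ne' heq
    · exact not_dedge_top huv
    · exact hlt.ne hlvl
    · obtain ⟨rfl, rfl, rfl⟩ := (hx : a = a' ∧ r = s' ∧ x = j)
      obtain ⟨rfl, rfl, rfl⟩ := (hx' : b₀ = b ∧ s₀ = s ∧ x' = jx)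
      rcases hord' with ⟨heq, hj⟩ | hlt' <;> rcases hord with ⟨heq', hj'⟩ | hlt
      · obtain ⟨rfl, rfl⟩ := Prod.mk.inj heq
        exact (pedge_mono hp hp' hj).not_gt hj'
      · exact pairLexLt_irrefl _ (heq ▸ hlt)
      · exact pairLexLt_irrefl _ (heq' ▸ hlt')
      · exact pairLexLt_asymm hlt hlt'

end Digraph

/-- If every `x ∈ C` has an out-neighbour in `D`, every `y ∈ D` has an in-neighbour
in `C`, and `D ⊄ R`, then the `⊑`-minimal elements `c` of `C` and `d` of `D`
satisfy `c → d`. -/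
theorem minimal_elements_edge {A : Type} [LinearOrder A] {k : ℕ}
    (R : Set (Fin k → A)) (C D : Set (DVert R))
    (hC : ∀ x ∈ C, ∃ y' ∈ D, dedge x y')
    (hD : ∀ y ∈ D, ∃ x' ∈ C, dedge x' y)
    (hDR : ¬ D ⊆ {v : DVert R | ∃ r hr, v = DVert.top r hr})
    (c d : DVert R)
    (hc : c ∈ C ∧ ∀ x ∈ C, x = c ∨ sqlt c x)
    (hd : d ∈ D ∧ ∀ y ∈ D, y = d ∨ sqlt d y) :
    dedge c d := by
  obtain ⟨hcC, hcmin⟩ := hc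
  obtain ⟨hdD, hdmin⟩ := hd
  obtain ⟨y', hy'D, hcy'⟩ := hC c hcC
  obtain ⟨x', hx'C, hx'd⟩ := hD d hdD
  rcases hcmin x' hx'C with rfl | hcx
  · exact hx'd
  rcases hdmin y' hy'D with rfl | hdy
  · exact hcy'
  have hlvl : lvlD c = lvlD x' := by
    have := lvlD_le_of_sqlt hcx
    have := lvlD_le_of_sqlt hdy
    have := lvlD_of_dedge hcy'
    have := lvlD_of_dedge hx'd
    omega
  exact absurd hdy (not_sqlt_of_dedge_of_sqlt hcx hlvl hcy' hx'd (ne_top_of_minimal hdmin hDR))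
end
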